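/- arXiv:1902.06227 — 2 statements merged into one kernel-verified Lean document; each statement's English description precedes it below -/
import Mathlib

section
/- (Lemma 1) Let ν > −1 and let f(x) = ∑_{k=0}^n f_k x^k be a real polynomial of degree at most n. Define the associated polynomial q(t) = ∑_{k=0}^n f_k (−1)^k k! t^k L_k^ν(t), of degree at most 2n. Then for every x > 0, f(x) · ρ_ν(x) = ∫₀^∞ t^(ν−1) e^(−t − x/t) q(t) dt. -/
open Real MeasureTheory Set Filter

lemma exp_neg_le_aux {x t : ℝ} (hx : 0 < x) (m : ℕ) (ht : 0 < t) :
    Real.exp (-(x / t)) ≤ m.factorial * (t / x) ^ m := by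
  have hu : 0 < x / t := div_pos hx ht
  have h := Real.pow_div_factorial_le_exp (x := x/t) hu.le m
  have h2 : 0 < (x / t) ^ m / m.factorial := by positivity
  rw [Real.exp_neg]
  calc (Real.exp (x/t))⁻¹ ≤ ((x/t)^m / m.factorial)⁻¹ := inv_anti₀ h2 h
    _ = m.factorial * (t/x)^m := by
        rw [div_pow, div_pow]
        field_simp

lemma bound_aux {x t : ℝ} (hx : 0 < x) (a : ℝ) (m : ℕ) (ht : 0 < t) :
    t ^ a * Real.exp (-t - x / t) ≤ (m.factorial / x ^ m) * (Real.exp (-t) * t ^ (a + m)) := by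
  have hsplit : Real.exp (-t - x / t) = Real.exp (-t) * Real.exp (-(x / t)) := by
    rw [← Real.exp_add]; ring_nf
  have h1 := exp_neg_le_aux hx m ht
  have h2 : t ^ (a + (m:ℝ)) = t ^ a * t ^ m := by
    rw [Real.rpow_add ht, Real.rpow_natCast]
  rw [hsplit, h2]
  have h3 : t ^ a * (Real.exp (-t) * Real.exp (-(x/t))) ≤ t ^ a * (Real.exp (-t) * (m.factorial * (t/x)^m)) := by
    apply mul_le_mul_of_nonneg_left _ (Real.rpow_nonneg ht.le a)
    exact mul_le_mul_of_nonneg_left h1 (Real.exp_pos _).le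
  calc t ^ a * (Real.exp (-t) * Real.exp (-(x/t)))
      ≤ t ^ a * (Real.exp (-t) * (m.factorial * (t/x)^m)) := h3
    _ = (m.factorial / x ^ m) * (Real.exp (-t) * (t ^ a * t ^ m)) := by
        rw [div_pow]; field_simp

lemma integrableOn_aux {x : ℝ} (hx : 0 < x) (a : ℝ) :
    IntegrableOn (fun t : ℝ => t ^ a * Real.exp (-t - x / t)) (Set.Ioi 0) := by
  obtain ⟨m, hm⟩ := exists_nat_gt (-a)
  have hs : (0:ℝ) < a + m + 1 := by linarith
  have hg : IntegrableOn (fun t : ℝ => (m.factorial / x ^ m) * (Real.exp (-t) * t ^ (a + m + 1 - 1))) (Set.Ioi 0) :=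
    (Real.GammaIntegral_convergent hs).const_mul _
  refine Integrable.mono hg ?_ ?_
  · apply ContinuousOn.aestronglyMeasurable _ measurableSet_Ioi
    intro t ht
    have ht' : (0:ℝ) < t := ht
    apply ContinuousWithinAt.mul
    · exact (Real.continuousAt_rpow_const t a (Or.inl ht'.ne')).continuousWithinAt
    · exact (Real.continuous_exp.continuousAt.comp
        ((continuousAt_id.neg.sub (continuousAt_const.div continuousAt_id ht'.ne')))).continuousWithinAt
  · filter_upwards [ae_restrict_mem measurableSet_Ioi] with t ht
    have ht' : (0:ℝ) < t := ht
    rw [Real.norm_eq_abs, Real.norm_eq_abs, abs_of_nonneg (by positivity), abs_of_nonneg (by positivity)]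
    simpa using bound_aux hx a m ht'

noncomputable def J (x b : ℝ) : ℝ := ∫ t in Set.Ioi (0:ℝ), t ^ (b - 1) * Real.exp (-t - x / t)

lemma J_shift {x : ℝ} (c : ℝ) :
    (∫ t in Set.Ioi (0:ℝ), t ^ c * Real.exp (-t - x / t)) = J x (c+1) := by
  rw [J, add_sub_cancel_right]

lemma hasDerivAt_g {x : ℝ} (hx : 0 < x) (b : ℝ) {t : ℝ} (ht : 0 < t) :
    HasDerivAt (fun s : ℝ => if s ≤ 0 then 0 else s ^ (b+1) * Real.exp (-s - x / s))
      ((b+1) * (t ^ b * Real.exp (-t - x/t)) - t ^ (b+1) * Real.exp (-t - x/t)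
        + x * (t ^ (b-1) * Real.exp (-t - x/t))) t := by
  have h1 : HasDerivAt (fun s : ℝ => s ^ (b+1)) ((b+1) * t ^ b) t := by
    have := Real.hasDerivAt_rpow_const (x := t) (p := b+1) (Or.inl ht.ne')
    simpa [add_sub_cancel_right] using this
  have hinner : HasDerivAt (fun s : ℝ => -s - x / s) (-1 - x * (-(t^2)⁻¹)) t := by
    have hi : HasDerivAt (fun s : ℝ => x / s) (x * (-(t^2)⁻¹)) t := by
      simpa [div_eq_mul_inv] using (hasDerivAt_inv ht.ne').const_mul x
    exact ((hasDerivAt_id t).neg).sub hi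
  have hexp := hinner.exp
  have hprod := h1.mul hexp
  have heq : (fun s : ℝ => if s ≤ 0 then 0 else s ^ (b+1) * Real.exp (-s - x / s))
      =ᶠ[nhds t] (fun s => s ^ (b+1) * Real.exp (-s - x / s)) := by
    filter_upwards [Ioi_mem_nhds ht] with s hs
    simp [not_le.mpr (show (0:ℝ) < s from hs)]
  refine HasDerivAt.congr_of_eventuallyEq ?_ heq
  refine hprod.congr_deriv ?_
  have ht2 : t ^ (b+1) = t ^ (b-1) * t^2 := by
    rw [← Real.rpow_natCast t 2, ← Real.rpow_add ht]; congr 1; ring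
  rw [ht2]
  have h2 : (t:ℝ)^2 ≠ 0 := by positivity
  field_simp
  ring


lemma tendsto_g_zero {x : ℝ} (hx : 0 < x) (b : ℝ) :
    ContinuousWithinAt (fun s : ℝ => if s ≤ 0 then 0 else s ^ (b+1) * Real.exp (-s - x / s))
      (Set.Ici 0) 0 := by
  obtain ⟨m, hm⟩ := exists_nat_gt (-(b+1))
  have hp : (0:ℝ) < b + 1 + m := by linarith
  unfold ContinuousWithinAt
  have h0 : ((fun s : ℝ => if s ≤ 0 then (0:ℝ) else s ^ (b+1) * Real.exp (-s - x / s)) 0) = 0 := by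
    norm_num
  rw [h0]
  apply squeeze_zero' (g := fun s => ((m.factorial : ℝ) / x ^ m) * s ^ (b + 1 + m))
  · filter_upwards [self_mem_nhdsWithin] with s hs
    split
    · exact le_rfl
    · rename_i h
      have hs' : 0 < s := lt_of_le_of_ne hs (fun h' => h (le_of_eq h'.symm))
      positivity
  · filter_upwards [self_mem_nhdsWithin] with s hs
    rcases eq_or_lt_of_le (show (0:ℝ) ≤ s from hs) with h | h
    · rw [if_pos (le_of_eq h.symm), ← h, Real.zero_rpow hp.ne']
      simp
    · rw [if_neg (not_le.mpr h)]
      calc s ^ (b+1) * Real.exp (-s - x/s)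
          ≤ ((m.factorial : ℝ) / x ^ m) * (Real.exp (-s) * s ^ (b + 1 + m)) := bound_aux hx (b+1) m h
        _ ≤ ((m.factorial : ℝ) / x ^ m) * (1 * s ^ (b + 1 + m)) := by
            apply mul_le_mul_of_nonneg_left _ (by positivity)
            apply mul_le_mul_of_nonneg_right _ (Real.rpow_nonneg h.le _)
            exact Real.exp_le_one_iff.mpr (by linarith)
        _ = ((m.factorial : ℝ) / x ^ m) * s ^ (b + 1 + m) := by ring
  · have h1 : Filter.Tendsto (fun s : ℝ => s ^ (b+1+(m:ℝ))) (nhdsWithin 0 (Set.Ici 0)) (nhds 0) := by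
      have := (Real.continuousAt_rpow_const 0 (b+1+m) (Or.inr hp.le)).tendsto
      rw [Real.zero_rpow hp.ne'] at this
      exact this.mono_left nhdsWithin_le_nhds
    simpa using h1.const_mul ((m.factorial : ℝ) / x ^ m)

lemma tendsto_g_top {x : ℝ} (hx : 0 < x) (b : ℝ) :
    Filter.Tendsto (fun s : ℝ => if s ≤ 0 then 0 else s ^ (b+1) * Real.exp (-s - x / s))
      Filter.atTop (nhds 0) := by
  apply squeeze_zero' (g := fun s : ℝ => s ^ (b+1) * Real.exp (-1 * s))
  · filter_upwards [Filter.eventually_gt_atTop 0] with s hs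
    rw [if_neg (not_le.mpr hs)]
    positivity
  · filter_upwards [Filter.eventually_gt_atTop 0] with s hs
    rw [if_neg (not_le.mpr hs)]
    apply mul_le_mul_of_nonneg_left _ (Real.rpow_nonneg hs.le _)
    apply Real.exp_le_exp.mpr
    have : 0 < x / s := div_pos hx hs
    linarith
  · exact tendsto_rpow_mul_exp_neg_mul_atTop_nhds_zero (b+1) 1 one_pos

lemma J_rec {x : ℝ} (hx : 0 < x) (b : ℝ) : x * J x b = J x (b+2) - (b+1) * J x (b+1) := by
  have hA : IntegrableOn (fun t : ℝ => (b+1) * (t ^ b * Real.exp (-t - x/t))) (Set.Ioi 0) :=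
    (integrableOn_aux hx b).const_mul _
  have hB : IntegrableOn (fun t : ℝ => t ^ (b+1) * Real.exp (-t - x/t)) (Set.Ioi 0) :=
    integrableOn_aux hx (b+1)
  have hC : IntegrableOn (fun t : ℝ => x * (t ^ (b-1) * Real.exp (-t - x/t))) (Set.Ioi 0) :=
    (integrableOn_aux hx (b-1)).const_mul _
  have hint : IntegrableOn (fun t : ℝ => (b+1) * (t ^ b * Real.exp (-t - x/t))
      - t ^ (b+1) * Real.exp (-t - x/t) + x * (t ^ (b-1) * Real.exp (-t - x/t))) (Set.Ioi 0) :=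
    (hA.sub hB).add hC
  have h0 := integral_Ioi_of_hasDerivAt_of_tendsto (tendsto_g_zero hx b)
    (fun t ht => hasDerivAt_g hx b ht) hint (tendsto_g_top hx b)
  have hAB : IntegrableOn (fun t : ℝ => (b+1) * (t ^ b * Real.exp (-t - x/t))
      - t ^ (b+1) * Real.exp (-t - x/t)) (Set.Ioi 0) := hA.sub hB
  rw [integral_add hAB hC, integral_sub hA hB, integral_const_mul, integral_const_mul] at h0
  rw [J_shift, J_shift, show b + 1 + 1 = b + 2 by ring] at h0
  have hJb : (∫ a in Set.Ioi (0:ℝ), a ^ (b-1) * Real.exp (-a - x/a)) = J x b := rfl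
  rw [hJb] at h0
  have hg0 : (if (0:ℝ) ≤ 0 then (0:ℝ) else (0:ℝ) ^ (b+1) * Real.exp (-0 - x / 0)) = 0 := by simp
  rw [hg0] at h0
  have : (b+1) * J x (b+1) - J x (b+2) + x * J x b = 0 := by linarith [h0]
  linarith

noncomputable def acoef (ν : ℝ) (k j : ℕ) : ℝ :=
  (-1 : ℝ)^(k+j) * (k.choose j) * Real.Gamma (k + ν + 1) / Real.Gamma (j + ν + 1)

lemma Gamma_succ_arg {ν : ℝ} (hν : ν > -1) (k : ℕ) :
    Real.Gamma ((k:ℝ) + 1 + ν + 1) = ((k:ℝ) + ν + 1) * Real.Gamma ((k:ℝ) + ν + 1) := by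
  have h : ((k:ℝ) + ν + 1) ≠ 0 := by
    have : (0:ℝ) ≤ k := Nat.cast_nonneg k
    linarith
  rw [show (k:ℝ) + 1 + ν + 1 = ((k:ℝ) + ν + 1) + 1 by ring, Real.Gamma_add_one h]

lemma acoef_succ {ν : ℝ} (hν : ν > -1) (k j : ℕ) :
    acoef ν (k+1) (j+1) = acoef ν k j - (ν + k + j + 2) * acoef ν k (j+1) := by
  have hkpos : (0:ℝ) < (k:ℝ) + ν + 1 := by
    have : (0:ℝ) ≤ k := Nat.cast_nonneg k; linarith
  have hjpos : (0:ℝ) < (j:ℝ) + ν + 1 := by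
    have : (0:ℝ) ≤ j := Nat.cast_nonneg j; linarith
  have hGk : 0 < Real.Gamma ((k:ℝ) + ν + 1) := Real.Gamma_pos_of_pos hkpos
  have hGj : 0 < Real.Gamma ((j:ℝ) + ν + 1) := Real.Gamma_pos_of_pos hjpos
  rcases le_or_gt j k with hjk | hjk
  · have pascal : (((k+1).choose (j+1) : ℕ) : ℝ) = k.choose j + k.choose (j+1) := by
      rw [Nat.choose_succ_succ]; push_cast; ring
    have hcs : ((k.choose (j+1) : ℕ) : ℝ) * (j+1) = (k.choose j) * ((k:ℝ) - j) := by
      have h2 : (k.choose (j+1)) * (j+1) = k.choose j * (k - j) := Nat.choose_succ_right_eq k j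
      have h3 : (((k.choose (j+1)) * (j+1) : ℕ) : ℝ) = ((k.choose j * (k - j) : ℕ) : ℝ) := by
        exact_mod_cast congrArg Nat.cast h2
      push_cast [Nat.cast_sub hjk] at h3
      linarith [h3]
    have key : (((k+1).choose (j+1) : ℕ) : ℝ) * ((k:ℝ)+ν+1)
        = (k.choose j) * ((j:ℝ)+ν+1) + (ν+(k:ℝ)+(j:ℝ)+2) * (k.choose (j+1)) := by
      linear_combination ((k:ℝ)+ν+1) * pascal - hcs
    unfold acoef
    push_cast
    rw [Gamma_succ_arg hν k, Gamma_succ_arg hν j]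
    have e1 : (-1:ℝ)^(k+1+(j+1)) = (-1:ℝ)^(k+j) := by
      rw [show k+1+(j+1) = (k+j)+2 by ring, pow_add]; norm_num
    have e2 : (-1:ℝ)^(k+(j+1)) = -(-1:ℝ)^(k+j) := by
      rw [show k+(j+1) = (k+j)+1 by ring, pow_add]; norm_num
    rw [e1, e2]
    push_cast at key
    set s : ℝ := (-1:ℝ)^(k+j) with hs
    set G : ℝ := Real.Gamma ((k:ℝ)+ν+1) with hG
    set H : ℝ := Real.Gamma ((j:ℝ)+ν+1) with hH
    have hHne : H ≠ 0 := ne_of_gt hGj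
    have hune : ((j:ℝ)+ν+1) ≠ 0 := ne_of_gt hjpos
    have goal2 : s * ↑((k+1).choose (j+1)) * (((k:ℝ) + ν + 1) * G)
        = ((j:ℝ)+ν+1) * (s * ↑(k.choose j) * G) - (ν + ↑k + ↑j + 2) * (-s * ↑(k.choose (j+1)) * G) := by
      linear_combination (s * G) * key
    rw [← mul_div_assoc]
    rw [div_sub_div _ _ hHne (mul_ne_zero hune hHne)]
    rw [div_eq_div_iff (mul_ne_zero hune hHne) (mul_ne_zero hHne (mul_ne_zero hune hHne))]
    linear_combination (H * H * ((j:ℝ)+ν+1) * s * G) * key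
  · have h1 : (k+1).choose (j+1) = 0 := Nat.choose_eq_zero_of_lt (by omega)
    have h2 : k.choose j = 0 := Nat.choose_eq_zero_of_lt hjk
    have h3 : k.choose (j+1) = 0 := Nat.choose_eq_zero_of_lt (by omega)
    unfold acoef
    rw [h1, h2, h3]
    simp

lemma acoef_zero_succ {ν : ℝ} (hν : ν > -1) (k : ℕ) :
    acoef ν (k+1) 0 = -(ν + k + 1) * acoef ν k 0 := by
  unfold acoef
  simp only [Nat.choose_zero_right, Nat.cast_one, Nat.cast_zero]
  push_cast
  rw [Gamma_succ_arg hν k, pow_succ]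
  ring

lemma acoef_top {ν : ℝ} (k : ℕ) : acoef ν k (k+1) = 0 := by
  unfold acoef
  rw [Nat.choose_eq_zero_of_lt (by omega)]
  simp

lemma key_lemma {ν x : ℝ} (hν : ν > -1) (hx : 0 < x) (k : ℕ) :
    x ^ k * J x ν = ∑ j ∈ Finset.range (k+1), acoef ν k j * J x (ν + k + j) := by
  induction k with
  | zero =>
      simp only [pow_zero, one_mul, Finset.range_one, Finset.sum_singleton]
      unfold acoef
      norm_num
      rw [div_self (ne_of_gt (Real.Gamma_pos_of_pos (by linarith : (0:ℝ) < ν + 1)))]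
      simp
  | succ k ih =>
      have step : ∀ j : ℕ, x * J x (ν + k + j)
          = J x (ν + k + j + 2) - (ν + k + j + 1) * J x (ν + k + j + 1) := by
        intro j
        have h := J_rec hx (ν + (k:ℝ) + j)
        linarith [h]
      have expand : x ^ (k+1) * J x ν = ∑ j ∈ Finset.range (k+1),
          acoef ν k j * (J x (ν + k + j + 2) - (ν + k + j + 1) * J x (ν + k + j + 1)) := by
        calc x^(k+1) * J x ν = x * (x^k * J x ν) := by ring
          _ = x * ∑ j ∈ Finset.range (k+1), acoef ν k j * J x (ν + k + j) := by rw [ih]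
          _ = ∑ j ∈ Finset.range (k+1), acoef ν k j * (x * J x (ν + k + j)) := by
              rw [Finset.mul_sum]; exact Finset.sum_congr rfl fun j _ => by ring
          _ = _ := Finset.sum_congr rfl fun j _ => by rw [step j]
      rw [expand]
      have lhs_eq : ∑ j ∈ Finset.range (k+1),
            acoef ν k j * (J x (ν + k + j + 2) - (ν + k + j + 1) * J x (ν + k + j + 1))
          = (∑ j ∈ Finset.range (k+1), acoef ν k j * J x (ν + k + j + 2))
            - ∑ j ∈ Finset.range (k+1), (acoef ν k j * (ν + k + j + 1)) * J x (ν + k + j + 1) := by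
        rw [← Finset.sum_sub_distrib]
        exact Finset.sum_congr rfl fun j _ => by ring
      rw [lhs_eq]
      have snd : ∑ j ∈ Finset.range (k+1), (acoef ν k j * (ν + k + j + 1)) * J x (ν + k + j + 1)
          = (∑ j ∈ Finset.range k,
              (acoef ν k (j+1) * (ν + k + (j+1:ℕ) + 1)) * J x (ν + k + (j+1:ℕ) + 1))
            + (acoef ν k 0 * (ν + k + (0:ℕ) + 1)) * J x (ν + k + (0:ℕ) + 1) :=
        Finset.sum_range_succ' _ k
      have ext : ∑ j ∈ Finset.range k,
            (acoef ν k (j+1) * (ν + k + (j+1:ℕ) + 1)) * J x (ν + k + (j+1:ℕ) + 1)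
          = ∑ j ∈ Finset.range (k+1),
            (acoef ν k (j+1) * (ν + k + (j+1:ℕ) + 1)) * J x (ν + k + (j+1:ℕ) + 1) := by
        rw [Finset.sum_range_succ, acoef_top]
        ring
      rw [snd, ext]
      rw [Finset.sum_range_succ' (fun j => acoef ν (k+1) j * J x (ν + (k+1:ℕ) + j)) (k+1)]
      have term_eq : ∀ j ∈ Finset.range (k+1),
          acoef ν (k+1) (j+1) * J x (ν + (k+1:ℕ) + (j+1:ℕ))
          = acoef ν k j * J x (ν + k + j + 2)
            - (acoef ν k (j+1) * (ν + k + (j+1:ℕ) + 1)) * J x (ν + k + (j+1:ℕ) + 1) := by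
        intro j _
        rw [acoef_succ hν k j]
        have e1 : ν + ((k:ℝ)+1) + ((j:ℝ)+1) = ν + k + j + 2 := by ring
        push_cast
        rw [e1]
        ring
      rw [Finset.sum_congr rfl term_eq, Finset.sum_sub_distrib]
      have hb : acoef ν (k+1) 0 * J x (ν + ((k+1:ℕ):ℝ) + ((0:ℕ):ℝ))
          = -(acoef ν k 0 * (ν + (k:ℝ) + ((0:ℕ):ℝ) + 1) * J x (ν + (k:ℝ) + ((0:ℕ):ℝ) + 1)) := by
        rw [acoef_zero_succ hν k]
        push_cast
        rw [show ν + ((k:ℝ)+1) + 0 = ν + (k:ℝ) + 0 + 1 by ring]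
        ring
      rw [hb]
      ring


/-- The scaled Macdonald function `ρ_ν(x) = ∫₀^∞ t^(ν−1) e^(−t − x/t) dt`. -/
noncomputable def rho (ν x : ℝ) : ℝ :=
  ∫ t in Set.Ioi (0 : ℝ), t ^ (ν - 1) * Real.exp (-t - x / t)

/-- The associated Laguerre polynomial
`L_n^ν(x) = ∑_{k=0}^n ((−1)^k/k!)·(Γ(n+ν+1)/(Γ(k+ν+1)·(n−k)!))·x^k`. -/
noncomputable def assocLaguerre (ν : ℝ) (n : ℕ) (x : ℝ) : ℝ :=
  ∑ k ∈ Finset.range (n + 1),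
    ((-1 : ℝ) ^ k / k.factorial) *
      (Real.Gamma (n + ν + 1) / (Real.Gamma (k + ν + 1) * (n - k).factorial)) * x ^ k

theorem lemma1 (ν : ℝ) (hν : ν > -1) (n : ℕ) (f : ℕ → ℝ) (x : ℝ) (hx : 0 < x) :
    (∑ k ∈ Finset.range (n + 1), f k * x ^ k) * rho ν x =
      ∫ t in Set.Ioi (0 : ℝ),
        t ^ (ν - 1) * Real.exp (-t - x / t) *
          (∑ k ∈ Finset.range (n + 1),
            f k * (-1 : ℝ) ^ k * k.factorial * t ^ k * assocLaguerre ν k t) := by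
  have hrho : rho ν x = J x ν := rfl
  -- pointwise expansion of the integrand
  have stepA : ∀ t ∈ Set.Ioi (0:ℝ),
      t ^ (ν - 1) * Real.exp (-t - x / t) *
          (∑ k ∈ Finset.range (n + 1),
            f k * (-1 : ℝ) ^ k * k.factorial * t ^ k * assocLaguerre ν k t)
      = ∑ k ∈ Finset.range (n + 1), ∑ j ∈ Finset.range (k + 1),
          (f k * acoef ν k j) * (t ^ (ν + (k:ℝ) + (j:ℝ) - 1) * Real.exp (-t - x / t)) := by
    intro t ht
    have ht' : (0:ℝ) < t := ht
    rw [Finset.mul_sum]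
    refine Finset.sum_congr rfl fun k _ => ?_
    unfold assocLaguerre
    rw [Finset.mul_sum, Finset.mul_sum]
    refine Finset.sum_congr rfl fun j hj => ?_
    have hjk : j ≤ k := Nat.lt_succ_iff.mp (Finset.mem_range.mp hj)
    have hchoose : ((k.choose j : ℕ) : ℝ) = (k.factorial : ℝ) / ((j.factorial : ℝ) * ((k-j).factorial : ℝ)) := by
      rw [Nat.cast_choose ℝ hjk]
    have hpow : t ^ (ν + (k:ℝ) + (j:ℝ) - 1) = t ^ (ν - 1) * t ^ (k:ℕ) * t ^ (j:ℕ) := by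
      rw [show ν + (k:ℝ) + (j:ℝ) - 1 = (ν - 1) + (k:ℝ) + (j:ℝ) by ring,
        Real.rpow_add ht', Real.rpow_add ht', Real.rpow_natCast, Real.rpow_natCast]
    rw [hpow]
    unfold acoef
    rw [hchoose]
    have hjf : ((j.factorial : ℕ) : ℝ) ≠ 0 := Nat.cast_ne_zero.mpr j.factorial_ne_zero
    have hkjf : (((k-j).factorial : ℕ) : ℝ) ≠ 0 := Nat.cast_ne_zero.mpr (k-j).factorial_ne_zero
    have hGj : Real.Gamma ((j:ℝ) + ν + 1) ≠ 0 := by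
      have : (0:ℝ) ≤ j := Nat.cast_nonneg j
      exact ne_of_gt (Real.Gamma_pos_of_pos (by linarith))
    field_simp
    rw [pow_add]
    ring
  rw [setIntegral_congr_fun measurableSet_Ioi stepA]
  have hint : ∀ (k : ℕ), ∀ (j : ℕ), IntegrableOn
      (fun t : ℝ => (f k * acoef ν k j) * (t ^ (ν + (k:ℝ) + (j:ℝ) - 1) * Real.exp (-t - x / t)))
      (Set.Ioi 0) := fun k j => (integrableOn_aux hx _).const_mul _
  rw [integral_finset_sum _ (fun k _ => integrable_finset_sum _ (fun j _ => hint k j))]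
  have : ∀ k ∈ Finset.range (n+1),
      (∫ t in Set.Ioi (0:ℝ), ∑ j ∈ Finset.range (k + 1),
          (f k * acoef ν k j) * (t ^ (ν + (k:ℝ) + (j:ℝ) - 1) * Real.exp (-t - x / t)))
      = ∑ j ∈ Finset.range (k + 1), (f k * acoef ν k j) * J x (ν + (k:ℝ) + (j:ℝ)) := by
    intro k _
    rw [integral_finset_sum _ (fun j _ => hint k j)]
    refine Finset.sum_congr rfl fun j _ => ?_
    rw [integral_const_mul]
    rfl
  rw [Finset.sum_congr rfl this, hrho, Finset.sum_mul]
  refine Finset.sum_congr rfl fun k _ => ?_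
  calc f k * x ^ k * J x ν = f k * (x ^ k * J x ν) := by ring
    _ = f k * ∑ j ∈ Finset.range (k+1), acoef ν k j * J x (ν + (k:ℝ) + (j:ℝ)) := by
        rw [key_lemma hν hx k]
    _ = ∑ j ∈ Finset.range (k+1), f k * acoef ν k j * J x (ν + (k:ℝ) + (j:ℝ)) := by
        rw [Finset.mul_sum]
        exact Finset.sum_congr rfl fun j _ => by ring
end

section
/- (Corollary 1) Let ν > −1, let f(x) = ∑_{k=0}^n f_k x^k be a real polynomial of degree at most n, and let q(t) = ∑_{k=0}^n f_k (−1)^k k! t^k L_k^ν(t) be its associated polynomial, written in monomial form q(t) = ∑_{k=0}^{2n} q_k t^k. Then for every x > 0, f(x) · ρ_ν(x) = ∑_{k=0}^{2n} q_k · ρ_(ν+k)(x). -/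
open Real MeasureTheory

open Set Filter Topology

lemma lim_top (c x : ℝ) : Tendsto (fun t : ℝ => t ^ c * Real.exp (-t - x / t)) atTop (𝓝 0) := by
  have A := tendsto_rpow_mul_exp_neg_mul_atTop_nhds_zero c 1 one_pos
  have B : Tendsto (fun t : ℝ => Real.exp (-(x / t))) atTop (𝓝 1) := by
    have : Tendsto (fun t : ℝ => -(x / t)) atTop (𝓝 0) := by
      simpa [div_eq_mul_inv] using (tendsto_inv_atTop_zero.const_mul x).neg
    simpa [Function.comp_def] using (Real.continuous_exp.tendsto 0).comp this
  have := A.mul B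
  rw [zero_mul] at this
  refine this.congr fun t => ?_
  rw [mul_assoc, ← Real.exp_add]
  rw [show -1 * t + -(x / t) = -t - x/t by ring]

lemma lim_zero (c x : ℝ) (hx : 0 < x) :
    Tendsto (fun t : ℝ => t ^ c * Real.exp (-t - x / t)) (𝓝[>] (0:ℝ)) (𝓝 0) := by
  have A := tendsto_rpow_mul_exp_neg_mul_atTop_nhds_zero (-c) x hx
  have B : Tendsto (fun u : ℝ => Real.exp (-(1 / u))) atTop (𝓝 1) := by
    have : Tendsto (fun u : ℝ => -(1 / u)) atTop (𝓝 0) := by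
      simpa using (tendsto_inv_atTop_zero.const_mul (1:ℝ)).neg
    simpa [Function.comp_def] using (Real.continuous_exp.tendsto 0).comp this
  have C := (A.mul B).comp tendsto_inv_nhdsGT_zero
  rw [zero_mul] at C
  refine C.congr' ?_
  filter_upwards [self_mem_nhdsWithin] with t (ht : (0:ℝ) < t)
  show (t⁻¹) ^ (-c) * Real.exp (-x * t⁻¹) * Real.exp (-(1 / t⁻¹)) = t ^ c * Real.exp (-t - x / t)
  rw [Real.inv_rpow ht.le, Real.rpow_neg ht.le, inv_inv, one_div, inv_inv,
    mul_assoc, ← Real.exp_add, show -x * t⁻¹ + -t = -t - x/t by rw [div_eq_mul_inv]; ring]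

lemma contOn (c x : ℝ) : ContinuousOn (fun t : ℝ => t ^ c * Real.exp (-t - x / t)) (Ioi (0:ℝ)) := by
  apply ContinuousOn.mul
  · exact fun t ht => (Real.continuousAt_rpow_const t c (Or.inl (ne_of_gt ht))).continuousWithinAt
  · apply Real.continuous_exp.comp_continuousOn
    exact (continuousOn_id.neg).sub (continuousOn_const.div continuousOn_id fun t ht => ne_of_gt ht)

lemma cwa (c x : ℝ) (hx : 0 < x) :
    ContinuousWithinAt (fun t : ℝ => if t ≤ 0 then 0 else t ^ c * Real.exp (-t - x / t))
      (Ici (0:ℝ)) 0 := by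
  have h0 : (fun t : ℝ => if t ≤ 0 then 0 else t ^ c * Real.exp (-t - x / t)) 0 = 0 := by simp
  unfold ContinuousWithinAt
  rw [h0, ← Ioi_insert, nhdsWithin_insert]
  rw [tendsto_sup]
  constructor
  · rw [tendsto_pure_left]
    intro s hs
    simpa [h0] using mem_of_mem_nhds hs
  · refine (lim_zero c x hx).congr' ?_
    filter_upwards [self_mem_nhdsWithin] with t (ht : (0:ℝ) < t)
    rw [if_neg (not_le.2 ht)]

lemma bdd_Ioc (c x : ℝ) (hx : 0 < x) :
    ∃ C : ℝ, ∀ t ∈ Ioc (0:ℝ) 1, t ^ c * Real.exp (-t - x / t) ≤ C := by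
  set F : ℝ → ℝ := fun t => if t ≤ 0 then 0 else t ^ c * Real.exp (-t - x / t) with hF
  have hcont : ContinuousOn F (Icc (0:ℝ) 1) := by
    intro t ht
    rcases eq_or_lt_of_le ht.1 with rfl | htpos
    · exact (cwa c x hx).mono Icc_subset_Ici_self
    · have : ContinuousAt F t := by
        have : ∀ᶠ s in 𝓝 t, F s = s ^ c * Real.exp (-s - x / s) := by
          filter_upwards [Ioi_mem_nhds htpos] with s (hs : (0:ℝ) < s)
          rw [hF]; simp [not_le.2 hs]
        exact ContinuousAt.congr (((contOn c x) t htpos).continuousAt (Ioi_mem_nhds htpos))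
          (this.mono fun s hs => hs.symm)
      exact this.continuousWithinAt
  obtain ⟨C, hC⟩ := (isCompact_Icc.bddAbove_image hcont)
  refine ⟨C, fun t ht => ?_⟩
  have : F t ≤ C := hC (Set.mem_image_of_mem F ⟨ht.1.le, ht.2⟩)
  simpa [F, not_le.2 ht.1] using this

lemma integ (μ x : ℝ) (hx : 0 < x) :
    IntegrableOn (fun t : ℝ => t ^ (μ - 1) * Real.exp (-t - x / t)) (Ioi (0:ℝ)) := by
  have hmeas : AEStronglyMeasurable (fun t : ℝ => t ^ (μ - 1) * Real.exp (-t - x / t))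
      (volume.restrict (Ioi (0:ℝ))) :=
    (contOn (μ-1) x).aestronglyMeasurable measurableSet_Ioi
  have hpos : ∀ t ∈ Ioi (0:ℝ), 0 ≤ t ^ (μ - 1) * Real.exp (-t - x / t) := fun t ht =>
    mul_nonneg (Real.rpow_nonneg (le_of_lt ht) _) (Real.exp_pos _).le
  rw [show Ioi (0:ℝ) = Ioc 0 1 ∪ Ioi 1 from (Ioc_union_Ioi_eq_Ioi zero_le_one).symm]
  apply IntegrableOn.union
  · obtain ⟨C, hC⟩ := bdd_Ioc (μ-1) x hx
    apply Integrable.mono' (integrableOn_const measure_Ioc_lt_top.ne : IntegrableOn (fun _ : ℝ => C) (Ioc (0:ℝ) 1) volume)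
    · exact hmeas.mono_set Ioc_subset_Ioi_self
    · filter_upwards [ae_restrict_mem measurableSet_Ioc] with t ht
      rw [Real.norm_of_nonneg (hpos t ht.1)]
      exact hC t ht
  · set M := max μ 1 with hM
    have hMpos : (0:ℝ) < M := lt_of_lt_of_le zero_lt_one (le_max_right _ _)
    have hint : IntegrableOn (fun t : ℝ => Real.exp (-t) * t ^ (M - 1)) (Ioi (1:ℝ)) :=
      (Real.GammaIntegral_convergent hMpos).mono_set (Ioi_subset_Ioi zero_le_one)
    apply Integrable.mono' hint (hmeas.mono_set (Ioi_subset_Ioi zero_le_one))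
    filter_upwards [ae_restrict_mem measurableSet_Ioi] with t (ht : (1:ℝ) < t)
    have ht0 : (0:ℝ) < t := lt_trans zero_lt_one ht
    rw [Real.norm_of_nonneg (hpos t ht0)]
    have h1 : t ^ (μ - 1) ≤ t ^ (M - 1) :=
      Real.rpow_le_rpow_of_exponent_le ht.le (by simp [hM])
    have h2 : Real.exp (-t - x / t) ≤ Real.exp (-t) :=
      Real.exp_le_exp.2 (by nlinarith [div_nonneg hx.le ht0.le])
    calc t ^ (μ - 1) * Real.exp (-t - x / t) ≤ t ^ (M - 1) * Real.exp (-t) := by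
          exact mul_le_mul h1 h2 (Real.exp_pos _).le (Real.rpow_nonneg ht0.le _)
      _ = Real.exp (-t) * t ^ (M - 1) := mul_comm _ _

lemma rho_rec (ν x : ℝ) (hx : 0 < x) :
    rho (ν+1) x = ν * rho ν x + x * rho (ν-1) x := by
  set F : ℝ → ℝ := fun t => if t ≤ 0 then 0 else t ^ ν * Real.exp (-t - x / t) with hF
  set f' : ℝ → ℝ := fun t =>
    (ν * (t ^ (ν-1) * Real.exp (-t - x / t)) - t ^ (ν+1-1) * Real.exp (-t - x / t))
      + x * (t ^ (ν-1-1) * Real.exp (-t - x / t)) with hf'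
  have i1 := (integ ν x hx).const_mul ν
  have i2 := integ (ν+1) x hx
  have i3 := (integ (ν-1) x hx).const_mul x
  have i12 : IntegrableOn (fun t : ℝ =>
      ν * (t ^ (ν-1) * Real.exp (-t - x / t)) - t ^ (ν+1-1) * Real.exp (-t - x / t))
      (Ioi (0:ℝ)) := i1.sub i2
  have hderiv : ∀ t ∈ Ioi (0:ℝ), HasDerivAt F (f' t) t := by
    intro t ht
    have ht0 : (0:ℝ) < t := ht
    have h1 : HasDerivAt (fun s : ℝ => s ^ ν) (ν * t ^ (ν - 1)) t :=
      Real.hasDerivAt_rpow_const (Or.inl ht0.ne')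
    have hinv : HasDerivAt (fun s : ℝ => x / s) (x * -(t^2)⁻¹) t := by
      simpa [div_eq_mul_inv] using (hasDerivAt_inv ht0.ne').const_mul x
    have h2 : HasDerivAt (fun s : ℝ => -s - x / s) (-1 - x * -(t^2)⁻¹) t := by
      exact ((hasDerivAt_id t).neg).sub hinv
    have h4 := h1.mul h2.exp
    have hval : ν * t ^ (ν - 1) * Real.exp (-t - x / t) +
        (fun s : ℝ => s ^ ν) t * (Real.exp (-t - x / t) * (-1 - x * -(t^2)⁻¹)) = f' t := by
      simp only [hf']
      have e1 : ν + 1 - 1 = ν := by ring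
      have hpow : t ^ (ν - 1 - 1) = t ^ ν / (t * t) := by
        rw [show ν - 1 - 1 = ν - ((1:ℝ)+1) by ring, Real.rpow_sub ht0, Real.rpow_add ht0,
          Real.rpow_one]
      rw [e1, hpow]
      have h2t : t ^ 2 = t * t := sq t
      rw [h2t]
      field_simp
      ring
    have h5 : HasDerivAt (fun s : ℝ => s ^ ν * Real.exp (-s - x / s)) (f' t) t := hval ▸ h4
    refine h5.congr_of_eventuallyEq ?_
    filter_upwards [Ioi_mem_nhds ht0] with s (hs : (0:ℝ) < s)
    rw [hF]; simp [not_le.2 hs]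
  have f'int : IntegrableOn f' (Ioi (0:ℝ)) := (i1.sub i2).add i3
  have htop : Tendsto F atTop (𝓝 0) := by
    refine (lim_top ν x).congr' ?_
    filter_upwards [Ioi_mem_atTop 0] with t (ht : (0:ℝ) < t)
    rw [hF]; simp [not_le.2 ht]
  have key := integral_Ioi_of_hasDerivAt_of_tendsto (cwa ν x hx) hderiv f'int htop
  simp only [le_refl, if_true, sub_zero] at key
  have expand : (∫ t in Ioi (0:ℝ), f' t) = ν * rho ν x - rho (ν+1) x + x * rho (ν-1) x := by
    rw [hf']
    rw [MeasureTheory.integral_add i12 i3]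
    rw [MeasureTheory.integral_sub i1 i2,
      integral_const_mul, integral_const_mul]
    rfl
  rw [expand] at key
  linarith

lemma rho_step (μ x : ℝ) (hx : 0 < x) :
    x * rho μ x = rho (μ+2) x - (μ+1) * rho (μ+1) x := by
  have h := rho_rec (μ+1) x hx
  rw [show μ+1+1 = μ+2 by ring, show μ+1-1 = μ by ring] at h
  linarith

noncomputable def coef (ν : ℝ) (k i : ℕ) : ℝ :=
  (-1:ℝ)^(k+i) * k.factorial * Real.Gamma (k+ν+1) /
    (i.factorial * Real.Gamma (i+ν+1) * (k-i).factorial)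

lemma Gamma_ne (ν : ℝ) (hν : ν > -1) (m : ℕ) : Real.Gamma ((m:ℝ)+ν+1) ≠ 0 := by
  have : (0:ℝ) < (m:ℝ)+ν+1 := by
    have : (0:ℝ) ≤ m := Nat.cast_nonneg m
    linarith
  exact (Real.Gamma_pos_of_pos this).ne'

lemma Gamma_succ (ν : ℝ) (hν : ν > -1) (m : ℕ) :
    Real.Gamma ((m:ℝ)+1+ν+1) = ((m:ℝ)+ν+1) * Real.Gamma ((m:ℝ)+ν+1) := by
  rw [show (m:ℝ)+1+ν+1 = ((m:ℝ)+ν+1)+1 by ring, Real.Gamma_add_one]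
  have : (0:ℝ) ≤ m := Nat.cast_nonneg m
  intro h; linarith [h]

lemma coef_diag (ν : ℝ) (hν : ν > -1) (k : ℕ) : coef ν k k = 1 := by
  unfold coef
  rw [Nat.sub_self]
  have h1 : ((-1:ℝ))^(k+k) = 1 := by
    rw [← two_mul, pow_mul, neg_one_sq, one_pow]
  rw [h1]
  have h2 := Gamma_ne ν hν k
  have h3 : ((k.factorial : ℝ)) ≠ 0 := Nat.cast_ne_zero.2 k.factorial_ne_zero
  field_simp
  simp

lemma coef_rec (ν : ℝ) (hν : ν > -1) (k j : ℕ) (hj : j ≤ k) :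
    coef ν (k+1) j = (if j = 0 then 0 else coef ν k (j-1)) - (ν+k+1+j) * coef ν k j := by
  have hGν := Gamma_ne ν hν
  have hfac : ∀ m : ℕ, ((m.factorial : ℝ)) ≠ 0 := fun m => Nat.cast_ne_zero.2 m.factorial_ne_zero
  rcases Nat.eq_zero_or_pos j with rfl | hjpos
  · rw [if_pos rfl, zero_sub]
    unfold coef
    rw [Nat.sub_zero, Nat.sub_zero]
    have hGk := Gamma_succ ν hν k
    push_cast [Nat.factorial_succ]
    rw [hGk]
    have := hGν k; have := hGν 0; have := hfac k
    simp only [Nat.cast_zero, zero_add] at *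
    field_simp
    ring
  · obtain ⟨i, rfl⟩ : ∃ i, j = i + 1 := ⟨j - 1, (Nat.succ_pred_eq_of_pos hjpos).symm⟩
    have hik : i + 1 ≤ k := hj
    rw [if_neg (Nat.succ_ne_zero i), Nat.add_sub_cancel]
    unfold coef
    rw [Nat.succ_sub_succ]
    -- (k - i)! = (k - i) * (k - i - 1)!
    have hki : 1 ≤ k - i := by omega
    have hfacki : ((k - i).factorial : ℝ) = ((k:ℝ) - i) * ((k - (i+1)).factorial : ℝ) := by
      have h1 : k - i = (k - (i+1)) + 1 := by omega
      rw [h1, Nat.factorial_succ]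
      push_cast
      congr 1
      have : ((k - (i+1) : ℕ) : ℝ) = (k:ℝ) - (i+1) := by
        rw [Nat.cast_sub hik]; push_cast; ring
      rw [this]; push_cast; ring
    have hcast : ((k - i : ℕ) : ℝ) = (k:ℝ) - i := Nat.cast_sub (by omega)
    have hGk := Gamma_succ ν hν k
    have hGi := Gamma_succ ν hν i
    have hνk := hGν k; have hνi := hGν i
    have hν1 : ((i:ℝ)+1) + ν + 1 = ((i:ℝ)+ν+1)+1 := by ring
    push_cast [Nat.factorial_succ, hfacki]
    rw [hGk]
    rw [show Real.Gamma ((i:ℝ)+1+ν+1) = ((i:ℝ)+ν+1) * Real.Gamma ((i:ℝ)+ν+1) from hGi]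
    have hkipos : ((k:ℝ) - i) ≠ 0 := by
      have : (i:ℝ) < k := by exact_mod_cast (by omega : i < k)
      linarith
    have hiν : ((i:ℝ)+ν+1) ≠ 0 := by
      have : (0:ℝ) ≤ i := Nat.cast_nonneg i
      intro h; linarith
    have hkν : ((k:ℝ)+ν+1) ≠ 0 := by
      have : (0:ℝ) ≤ k := Nat.cast_nonneg k
      intro h; linarith
    have hf1 := hfac i; have hf2 := hfac k; have hf3 := hfac (k - (i+1))
    field_simp
    ring

lemma integ_pow (ν x : ℝ) (hx : 0 < x) (m : ℕ) :
    IntegrableOn (fun t : ℝ => t^m * (t ^ (ν-1) * Real.exp (-t - x/t))) (Ioi (0:ℝ)) := by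
  apply (integ (ν+m) x hx).congr_fun ?_ measurableSet_Ioi
  intro t ht
  have ht0 : (0:ℝ) < t := ht
  beta_reduce
  rw [show ν + (m:ℝ) - 1 = (m:ℝ) + (ν - 1) by ring, Real.rpow_add ht0, Real.rpow_natCast,
    mul_assoc]

lemma rho_nat_mul (ν x : ℝ) (hx : 0 < x) (m : ℕ) :
    (∫ t in Ioi (0:ℝ), t^m * (t ^ (ν-1) * Real.exp (-t - x/t))) = rho (ν+m) x := by
  unfold rho
  apply MeasureTheory.setIntegral_congr_fun measurableSet_Ioi
  intro t ht
  have ht0 : (0:ℝ) < t := ht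
  beta_reduce
  rw [show ν + (m:ℝ) - 1 = (m:ℝ) + (ν - 1) by ring, Real.rpow_add ht0, Real.rpow_natCast,
    mul_assoc]

lemma key (ν x : ℝ) (hν : ν > -1) (hx : 0 < x) (k : ℕ) :
    x^k * rho ν x = ∑ i ∈ Finset.range (k+1), coef ν k i * rho (ν + k + i) x := by
  induction k with
  | zero =>
    simp [coef_diag ν hν 0]
  | succ k ih =>
    have harg : ∀ (a b : ℝ), a = b → rho a x = rho b x := fun a b h => h ▸ rfl
    have h1 : x^(k+1) * rho ν x = x * (x^k * rho ν x) := by ring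
    rw [h1, ih, Finset.mul_sum]
    have step : ∀ i : ℕ, x * (coef ν k i * rho (ν + k + i) x)
        = coef ν k i * rho (ν + k + i + 2) x
          - (ν + k + i + 1) * coef ν k i * rho (ν + k + i + 1) x := by
      intro i
      have h := rho_step (ν + k + i) x hx
      calc x * (coef ν k i * rho (ν + k + i) x) = coef ν k i * (x * rho (ν + k + i) x) := by ring
        _ = _ := by rw [h]; ring
    rw [Finset.sum_congr rfl fun i _ => step i, Finset.sum_sub_distrib]
    push_cast
    have hrec : ∀ j ∈ Finset.range (k+1),
        coef ν (k+1) j * rho (ν + ((k:ℝ)+1) + j) x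
          = (if j = 0 then 0 else coef ν k (j-1) * rho (ν + ((k:ℝ)+1) + j) x)
            - (ν + k + j + 1) * coef ν k j * rho (ν + k + j + 1) x := by
      intro j hj
      rw [coef_rec ν hν k j (Nat.lt_succ_iff.1 (Finset.mem_range.1 hj)), sub_mul]
      congr 1
      · split_ifs with h
        · rw [zero_mul]
        · rfl
      · rw [harg (ν + ((k:ℝ)+1) + j) (ν + k + j + 1) (by ring)]
        ring
    rw [Finset.sum_range_succ (fun j => coef ν (k+1) j * rho (ν + ((k:ℝ)+1) + j) x) (k+1)]
    rw [Finset.sum_congr rfl hrec, Finset.sum_sub_distrib]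
    congr 1
    rw [Finset.sum_range_succ' (fun j =>
      if j = 0 then 0 else coef ν k (j-1) * rho (ν + ((k:ℝ)+1) + j) x) k]
    simp only [if_true, if_pos rfl, add_zero, if_neg (Nat.succ_ne_zero _), Nat.add_sub_cancel]
    rw [coef_diag ν hν (k+1)]
    have eA : (∑ i ∈ Finset.range k, coef ν k i * rho (ν + ((k:ℝ)+1) + ((i+1:ℕ):ℝ)) x)
        = ∑ i ∈ Finset.range k, coef ν k i * rho (ν + (k:ℝ) + i + 2) x := by
      refine Finset.sum_congr rfl fun i _ => ?_
      rw [harg (ν + ((k:ℝ)+1) + ((i+1:ℕ):ℝ)) (ν + (k:ℝ) + i + 2) (by push_cast; ring)]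
    rw [eA]
    rw [harg (ν + ((k:ℝ)+1) + (((k+1:ℕ)):ℝ)) (ν + (k:ℝ) + k + 2) (by push_cast; ring)]
    rw [Finset.sum_range_succ (fun i => coef ν k i * rho (ν + (k:ℝ) + i + 2) x) k,
      coef_diag ν hν k]
    ring

theorem corollary1 (ν : ℝ) (hν : ν > -1) (n : ℕ) (f : ℕ → ℝ) (q : ℕ → ℝ)
    (hq : ∀ t : ℝ, ∑ k ∈ Finset.range (2 * n + 1), q k * t ^ k =
      ∑ k ∈ Finset.range (n + 1),
        f k * (-1 : ℝ) ^ k * k.factorial * t ^ k * assocLaguerre ν k t)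
    (x : ℝ) (hx : 0 < x) :
    (∑ k ∈ Finset.range (n + 1), f k * x ^ k) * rho ν x =
      ∑ k ∈ Finset.range (2 * n + 1), q k * rho (ν + k) x := by
  have harg : ∀ (a b : ℝ), a = b → rho a x = rho b x := fun a b h => h ▸ rfl
  have hint : ∀ m : ℕ, IntegrableOn (fun t : ℝ => t^m * (t ^ (ν - 1) * Real.exp (-t - x / t))) (Ioi (0:ℝ)) :=
    integ_pow ν x hx
  have hintki : ∀ k i : ℕ, IntegrableOn
      (fun t : ℝ => (f k * coef ν k i) * (t^(k+i) * (t ^ (ν - 1) * Real.exp (-t - x / t)))) (Ioi (0:ℝ)) :=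
    fun k i => (hint (k+i)).const_mul _
  have hρm : ∀ m : ℕ, rho (ν + (m:ℝ)) x = ∫ t in Ioi (0:ℝ), t^m * (t ^ (ν - 1) * Real.exp (-t - x / t)) :=
    fun m => (rho_nat_mul ν x hx m).symm
  have hL : (∑ k ∈ Finset.range (n + 1), f k * x ^ k) * rho ν x
      = ∑ k ∈ Finset.range (n + 1), ∑ i ∈ Finset.range (k + 1),
          f k * (coef ν k i * rho (ν + k + i) x) := by
    rw [Finset.sum_mul]
    refine Finset.sum_congr rfl fun k _ => ?_
    rw [mul_assoc, key ν x hν hx k, Finset.mul_sum]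
  have hR : (∑ m ∈ Finset.range (2*n+1), q m * rho (ν + (m:ℝ)) x)
      = ∑ k ∈ Finset.range (n+1), ∑ i ∈ Finset.range (k+1),
          (f k * coef ν k i) * rho (ν + ((k+i:ℕ):ℝ)) x := by
    calc ∑ m ∈ Finset.range (2*n+1), q m * rho (ν + (m:ℝ)) x
        = ∑ m ∈ Finset.range (2*n+1), ∫ t in Ioi (0:ℝ), q m * (t^m * (t ^ (ν - 1) * Real.exp (-t - x / t))) := by
          refine Finset.sum_congr rfl fun m _ => ?_
          rw [hρm m]
          exact (MeasureTheory.integral_const_mul _ _).symm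
      _ = ∫ t in Ioi (0:ℝ), ∑ m ∈ Finset.range (2*n+1), q m * (t^m * (t ^ (ν - 1) * Real.exp (-t - x / t))) :=
          (MeasureTheory.integral_finset_sum _ fun m _ => (hint m).const_mul (q m)).symm
      _ = ∫ t in Ioi (0:ℝ), ∑ k ∈ Finset.range (n+1), ∑ i ∈ Finset.range (k+1),
            (f k * coef ν k i) * (t^(k+i) * (t ^ (ν - 1) * Real.exp (-t - x / t))) := by
          congr 1
          funext t
          have e1 : (∑ m ∈ Finset.range (2*n+1), q m * (t^m * (t ^ (ν - 1) * Real.exp (-t - x / t))))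
              = (∑ m ∈ Finset.range (2*n+1), q m * t^m) * (t ^ (ν - 1) * Real.exp (-t - x / t)) := by
            rw [Finset.sum_mul]
            exact Finset.sum_congr rfl fun m _ => by ring
          rw [e1, hq t, Finset.sum_mul]
          refine Finset.sum_congr rfl fun k _ => ?_
          simp only [assocLaguerre]
          rw [Finset.mul_sum, Finset.sum_mul]
          refine Finset.sum_congr rfl fun i hi => ?_
          simp only [coef]
          have hGi := Gamma_ne ν hν i
          have hGk := Gamma_ne ν hν k
          have hf1 : ((i.factorial : ℝ)) ≠ 0 := Nat.cast_ne_zero.2 i.factorial_ne_zero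
          have hf2 : (((k-i).factorial : ℝ)) ≠ 0 := Nat.cast_ne_zero.2 (k-i).factorial_ne_zero
          rw [pow_add]
          field_simp
          ring
      _ = ∑ k ∈ Finset.range (n+1), ∑ i ∈ Finset.range (k+1),
            (f k * coef ν k i) * rho (ν + ((k+i:ℕ):ℝ)) x := by
          rw [MeasureTheory.integral_finset_sum _
            (fun k _ => integrable_finset_sum _ fun i _ => hintki k i)]
          refine Finset.sum_congr rfl fun k _ => ?_
          rw [MeasureTheory.integral_finset_sum _ fun i _ => hintki k i]
          refine Finset.sum_congr rfl fun i _ => ?_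
          rw [MeasureTheory.integral_const_mul, hρm (k+i)]
  rw [hL, hR]
  refine Finset.sum_congr rfl fun k _ => Finset.sum_congr rfl fun i _ => ?_
  rw [harg (ν + ((k+i:ℕ):ℝ)) (ν + (k:ℝ) + (i:ℝ)) (by push_cast; ring)]
  ring
end
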